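/- arXiv:0709.4626 — 3 statements merged into one kernel-verified Lean document; each statement's English description precedes it below -/
import Mathlib

section
/- Let α > 0, γ₀ ∈ ℝ and k ∈ ℝ with k ≠ 0, and set d(k) = (1 + 1/(α²k²))^{-1/2} - 1. The complex 2×2 matrix A = [[0, (i/2)·sgn(k)·d(k)], [-(i/2)·γ₀²·k²·sgn(k)·d(k), 0]] has exactly the two eigenvalues λ = +(1/2)|γ₀||k|(1 - (1 + 1/(α²k²))^{-1/2}) and λ = -(1/2)|γ₀||k|(1 - (1 + 1/(α²k²))^{-1/2}); in particular both eigenvalues are real. -/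
/-! An antidiagonal `2 × 2` matrix `!![0, b; c, 0]` has characteristic polynomial `X² - b c`,
so its eigenvalues are `±s` for any square root `s` of `b c`. For the linearized
Birkhoff–Rott-α matrix, `sign k · k = |k|` and `I · (-I) = 1` make the product of the
off-diagonal entries equal to `((1/2) |γ₀| |k| (1 - (1 + 1/(α²k²))^{-1/2}))²`. -/

noncomputable section

open Real Complex

theorem Matrix.spectrum_antidiagonal_fin_two {K : Type*} [Field K] (b c s : K)
    (hs : s ^ 2 = b * c) :
    spectrum K !![0, b; c, 0] = {s, -s} := by
  ext μ
  have hcharpoly :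
      (!![0, b; c, 0] : Matrix (Fin 2) (Fin 2) K).charpoly.eval μ = μ ^ 2 - s ^ 2 := by
    simp [Matrix.charpoly_fin_two, hs, sub_eq_add_neg]
  rw [Matrix.mem_spectrum_iff_isRoot_charpoly, Polynomial.IsRoot, hcharpoly, sub_eq_zero,
    sq_eq_sq_iff_eq_or_eq_neg, Set.mem_insert_iff, Set.mem_singleton_iff]

theorem Real.sign_mul_self (r : ℝ) : Real.sign r * r = |r| := by
  rcases lt_trichotomy r 0 with h | rfl | h
  · rw [Real.sign_of_neg h, abs_of_neg h, neg_one_mul]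
  · simp
  · rw [Real.sign_of_pos h, abs_of_pos h, one_mul]

theorem brAlpha_linearization_eigenvalues_general
    (α γ₀ k : ℝ) :
    spectrum ℂ
      (!![0, (Complex.I / 2) * (Real.sign k : ℂ) *
            (((1 + 1 / (α ^ 2 * k ^ 2)) ^ (-(1 / 2) : ℝ) - 1 : ℝ) : ℂ);
          -(Complex.I / 2) * (γ₀ : ℂ) ^ 2 * (k : ℂ) ^ 2 * (Real.sign k : ℂ) *
            (((1 + 1 / (α ^ 2 * k ^ 2)) ^ (-(1 / 2) : ℝ) - 1 : ℝ) : ℂ), 0] :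
        Matrix (Fin 2) (Fin 2) ℂ) =
    {((1 / 2 * |γ₀| * |k| * (1 - (1 + 1 / (α ^ 2 * k ^ 2)) ^ (-(1 / 2) : ℝ)) : ℝ) : ℂ),
     ((-(1 / 2 * |γ₀| * |k| * (1 - (1 + 1 / (α ^ 2 * k ^ 2)) ^ (-(1 / 2) : ℝ))) : ℝ) : ℂ)} := by
  set r : ℝ := (1 + 1 / (α ^ 2 * k ^ 2)) ^ (-(1 / 2) : ℝ)
  have hsq : (1 / 2 * |γ₀| * |k| * (1 - r)) ^ 2
      = 1 / 4 * γ₀ ^ 2 * (Real.sign k * k) ^ 2 * (r - 1) ^ 2 := by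
    rw [Real.sign_mul_self, mul_pow, mul_pow, mul_pow, sq_abs]
    ring
  rw [Complex.ofReal_neg]
  refine Matrix.spectrum_antidiagonal_fin_two _ _ _ ?_
  rw [← Complex.ofReal_pow, hsq]
  push_cast
  linear_combination
    ((1 : ℂ) / 4 * γ₀ ^ 2 * k ^ 2 * (Real.sign k) ^ 2 * (r - 1) ^ 2) * Complex.I_sq

/-- The eigenvalues of the coefficient matrix, at wave number `k`, of the linearization
of the Birkhoff–Rott-α equation about the flat vortex sheet with uniform vorticity
density `γ₀` are `±(1/2)|γ₀||k|(1 - (1 + 1/(α²k²))^{-1/2})`; in particular both are real. -/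
theorem brAlpha_linearization_eigenvalues
    (α γ₀ k : ℝ) (hα : 0 < α) (hk : k ≠ 0) :
    spectrum ℂ
      (!![0, (Complex.I / 2) * (Real.sign k : ℂ) *
            (((1 + 1 / (α ^ 2 * k ^ 2)) ^ (-(1 / 2) : ℝ) - 1 : ℝ) : ℂ);
          -(Complex.I / 2) * (γ₀ : ℂ) ^ 2 * (k : ℂ) ^ 2 * (Real.sign k : ℂ) *
            (((1 + 1 / (α ^ 2 * k ^ 2)) ^ (-(1 / 2) : ℝ) - 1 : ℝ) : ℂ), 0] :
        Matrix (Fin 2) (Fin 2) ℂ) =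
    {((1 / 2 * |γ₀| * |k| * (1 - (1 + 1 / (α ^ 2 * k ^ 2)) ^ (-(1 / 2) : ℝ)) : ℝ) : ℂ),
     ((-(1 / 2 * |γ₀| * |k| * (1 - (1 + 1 / (α ^ 2 * k ^ 2)) ^ (-(1 / 2) : ℝ))) : ℝ) : ℂ)} :=
  brAlpha_linearization_eigenvalues_general α γ₀ k
end
end

section
/- Let α > 0 and γ₀ ∈ ℝ, and for k ≠ 0 define λ(k) = (1/2)|γ₀||k|(1 - (1 + 1/(α²k²))^{-1/2}). Then lim_{|k| → ∞} |k|·λ(k) = |γ₀|/(4α²); in particular λ(k) → 0 as |k| → ∞, with algebraic decay of order 1/(α²|k|). -/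
/- The limit comes from rationalising `1 - (1 + u)^{-1/2} = u / (√(1+u) (√(1+u) + 1))` with
`u = 1/(α²k²)`: then `|k| λ(k) = |γ₀| / (2α² √(1+u) (√(1+u) + 1))`, a continuous function of
`u` evaluated along `u → 0`, where it equals `|γ₀|/(4α²)`. -/

noncomputable section

open Real Filter

def brAlphaEigenvalue (α γ₀ k : ℝ) : ℝ :=
  1 / 2 * |γ₀| * |k| * (1 - (1 + 1 / (α ^ 2 * k ^ 2)) ^ (-(1 / 2) : ℝ))

lemma one_sub_rpow_neg_half {u : ℝ} (hu : -1 < u) :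
    1 - (1 + u) ^ (-(1 / 2) : ℝ) = u / (√(1 + u) * (√(1 + u) + 1)) := by
  have hpos : 0 < 1 + u := by linarith
  have hs : 0 < √(1 + u) := sqrt_pos.mpr hpos
  rw [rpow_neg hpos.le, ← sqrt_eq_rpow]
  field_simp
  nlinarith [sq_sqrt hpos.le]

lemma abs_mul_brAlphaEigenvalue (α γ₀ : ℝ) {k : ℝ} (hk : k ≠ 0) :
    |k| * brAlphaEigenvalue α γ₀ k =
      |γ₀| / (2 * α ^ 2) * (√(1 + 1 / (α ^ 2 * k ^ 2)) * (√(1 + 1 / (α ^ 2 * k ^ 2)) + 1))⁻¹ := by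
  have hu : -1 < 1 / (α ^ 2 * k ^ 2) := by linarith [show 0 ≤ 1 / (α ^ 2 * k ^ 2) by positivity]
  have hk2 : k ^ 2 * (1 / (α ^ 2 * k ^ 2)) = 1 / α ^ 2 := by
    rw [one_div, mul_inv, mul_left_comm, mul_inv_cancel₀ (pow_ne_zero 2 hk), mul_one, one_div]
  rw [brAlphaEigenvalue, one_sub_rpow_neg_half hu]
  generalize √(1 + 1 / (α ^ 2 * k ^ 2)) * (√(1 + 1 / (α ^ 2 * k ^ 2)) + 1) = D
  calc |k| * (1 / 2 * |γ₀| * |k| * (1 / (α ^ 2 * k ^ 2) / D))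
      = 1 / 2 * |γ₀| * (|k| * |k| * (1 / (α ^ 2 * k ^ 2))) / D := by ring
    _ = |γ₀| / (2 * α ^ 2) * D⁻¹ := by rw [abs_mul_abs_self, ← sq, hk2]; ring

lemma tendsto_abs_atBot_sup_atTop : Tendsto (fun k : ℝ => |k|) (atBot ⊔ atTop) atTop :=
  tendsto_sup.mpr ⟨tendsto_abs_atBot_atTop, tendsto_abs_atTop_atTop⟩

lemma tendsto_abs_mul_brAlphaEigenvalue (α γ₀ : ℝ) :
    Tendsto (fun k => |k| * brAlphaEigenvalue α γ₀ k) (atBot ⊔ atTop)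
      (nhds (|γ₀| / (4 * α ^ 2))) := by
  have hu : Tendsto (fun k : ℝ => 1 / (α ^ 2 * k ^ 2)) (atBot ⊔ atTop) (nhds 0) := by
    have hk2 : Tendsto (fun k : ℝ => (k ^ 2)⁻¹) (atBot ⊔ atTop) (nhds 0) := by
      have := ((tendsto_pow_atTop two_ne_zero).comp tendsto_abs_atBot_sup_atTop).inv_tendsto_atTop
      exact this.congr fun k => by simp only [Pi.inv_apply, Function.comp_apply, sq_abs]
    have := hk2.const_mul (α ^ 2)⁻¹
    rw [mul_zero] at this
    exact this.congr fun k => by rw [one_div, mul_inv]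
  have hg : ContinuousAt
      (fun u : ℝ => |γ₀| / (2 * α ^ 2) * (√(1 + u) * (√(1 + u) + 1))⁻¹) 0 := by
    fun_prop (disch := norm_num)
  have hg0 : |γ₀| / (2 * α ^ 2) * (√(1 + 0) * (√(1 + 0) + 1))⁻¹ = |γ₀| / (4 * α ^ 2) := by
    rw [add_zero, sqrt_one]; ring
  have hne : ∀ᶠ k : ℝ in atBot ⊔ atTop, k ≠ 0 :=
    tendsto_abs_atBot_sup_atTop.eventually_ne_atTop 0 |>.mono fun _ => abs_ne_zero.mp
  rw [← hg0]
  exact (hg.tendsto.comp hu).congr' (hne.mono fun k hk => (abs_mul_brAlphaEigenvalue α γ₀ hk).symm)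

theorem brAlpha_eigenvalue_decay_general (α γ₀ : ℝ) :
    Tendsto
      (fun k : ℝ => |k| *
        (1 / 2 * |γ₀| * |k| * (1 - (1 + 1 / (α ^ 2 * k ^ 2)) ^ (-(1 / 2) : ℝ))))
      (atBot ⊔ atTop) (nhds (|γ₀| / (4 * α ^ 2))) ∧
    Tendsto
      (fun k : ℝ => 1 / 2 * |γ₀| * |k| * (1 - (1 + 1 / (α ^ 2 * k ^ 2)) ^ (-(1 / 2) : ℝ)))
      (atBot ⊔ atTop) (nhds 0) := by
  have hlim := tendsto_abs_mul_brAlphaEigenvalue α γ₀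
  refine ⟨hlim, ?_⟩
  have hdecay := hlim.mul tendsto_abs_atBot_sup_atTop.inv_tendsto_atTop
  rw [mul_zero] at hdecay
  refine hdecay.congr' ?_
  filter_upwards [tendsto_abs_atBot_sup_atTop.eventually_gt_atTop 0] with k hk
  simp only [Pi.inv_apply]
  rw [mul_comm |k|, mul_assoc, mul_inv_cancel₀ hk.ne', mul_one, brAlphaEigenvalue]

/-- The positive eigenvalue `λ(k) = (1/2)|γ₀||k|(1 - (1 + 1/(α²k²))^{-1/2})` of the
linearized Birkhoff–Rott-α system satisfies `|k|·λ(k) → |γ₀|/(4α²)` as `|k| → ∞`;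
in particular `λ(k) → 0` with algebraic decay of order `1/(α²|k|)`. -/
theorem brAlpha_eigenvalue_decay (α γ₀ : ℝ) (hα : 0 < α) :
    Tendsto
      (fun k : ℝ => |k| *
        (1 / 2 * |γ₀| * |k| * (1 - (1 + 1 / (α ^ 2 * k ^ 2)) ^ (-(1 / 2) : ℝ))))
      (atBot ⊔ atTop) (nhds (|γ₀| / (4 * α ^ 2))) ∧
    Tendsto
      (fun k : ℝ => 1 / 2 * |γ₀| * |k| * (1 - (1 + 1 / (α ^ 2 * k ^ 2)) ^ (-(1 / 2) : ℝ)))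
      (atBot ⊔ atTop) (nhds 0) :=
  brAlpha_eigenvalue_decay_general α γ₀
end
end

section
/- Let C₁ > 0, T > 0, and let r : [0,T] → ℝ be differentiable with 0 < r(t) < 1 for all t ∈ [0,T] and r'(t) ≥ -C₁ r(t)(1 - log r(t)) for all t ∈ [0,T]. Then for every t ∈ [0,T]: r(t) ≥ r(0)^{exp(C₁ t)} · exp(1 - exp(C₁ t)). -/
/-!
With `u = 1 - log r` the differential inequality becomes the linear one `u' ≤ C₁ u`, so Grönwall
gives `1 - log r(t) ≤ (1 - log r(0)) exp(C₁ t)`; exponentiating is the claim.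
-/

noncomputable section

open Real Set

theorem le_mul_exp_of_hasDerivWithinAt_le_mul {u u' : ℝ → ℝ} {K a b : ℝ}
    (hu : ∀ x ∈ Icc a b, HasDerivWithinAt u (u' x) (Icc a b) x)
    (bound : ∀ x ∈ Ico a b, u' x ≤ K * u x) :
    ∀ x ∈ Icc a b, u x ≤ u a * exp (K * (x - a)) := by
  intro x hx
  have hu_right : ∀ y ∈ Ico a b, HasDerivWithinAt u (u' y) (Ici y) y := fun y hy =>
    (hu y (Ico_subset_Icc_self hy)).mono_of_mem_nhdsWithin (Icc_mem_nhdsGE_of_mem hy)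
  have := le_gronwallBound_of_liminf_deriv_right_le (K := K) (ε := 0)
    (fun y hy => (hu y hy).continuousWithinAt)
    (fun y hy _ hr => (hu_right y hy).liminf_right_slope_le hr) le_rfl
    (fun y hy => (add_zero (K * u y)).symm ▸ bound y hy) x hx
  rwa [gronwallBound_ε0] at this

theorem hasDerivWithinAt_one_sub_log {r : ℝ → ℝ} {r' x : ℝ} {s : Set ℝ}
    (hr : HasDerivWithinAt r r' s x) (hx : r x ≠ 0) :
    HasDerivWithinAt (fun y => 1 - log (r y)) (-(r' / r x)) s x :=
  (hr.log hx).const_sub 1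

theorem neg_div_le_mul_one_sub_log {C ρ ρ' : ℝ} (hρ : 0 < ρ)
    (h : ρ' ≥ -C * ρ * (1 - log ρ)) : -(ρ' / ρ) ≤ C * (1 - log ρ) := by
  rw [neg_le, le_div_iff₀ hρ]
  linarith

theorem rpow_mul_exp_one_sub_eq {x : ℝ} (hx : 0 < x) (E : ℝ) :
    x ^ E * exp (1 - E) = exp (1 - (1 - log x) * E) := by
  rw [rpow_def_of_pos hx, ← exp_add]
  ring_nf

theorem osgood_lowerBound_general
    (C₁ T : ℝ)
    (r r' : ℝ → ℝ)
    (hderiv : ∀ t ∈ Icc (0:ℝ) T, HasDerivWithinAt r (r' t) (Icc (0:ℝ) T) t)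
    (hpos : ∀ t ∈ Icc (0:ℝ) T, 0 < r t)
    (hineq : ∀ t ∈ Icc (0:ℝ) T, r' t ≥ -C₁ * r t * (1 - Real.log (r t))) :
    ∀ t ∈ Icc (0:ℝ) T,
      r t ≥ r 0 ^ Real.exp (C₁ * t) * Real.exp (1 - Real.exp (C₁ * t)) := by
  intro t ht
  have h0 : (0:ℝ) ∈ Icc (0:ℝ) T := left_mem_Icc.2 (ht.1.trans ht.2)
  have hgronwall : 1 - log (r t) ≤ (1 - log (r 0)) * exp (C₁ * (t - 0)) :=
    le_mul_exp_of_hasDerivWithinAt_le_mul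
      (fun s hs => hasDerivWithinAt_one_sub_log (hderiv s hs) (hpos s hs).ne')
      (fun s hs => neg_div_le_mul_one_sub_log (hpos s (Ico_subset_Icc_self hs))
        (hineq s (Ico_subset_Icc_self hs))) t ht
  rw [sub_zero] at hgronwall
  calc r 0 ^ exp (C₁ * t) * exp (1 - exp (C₁ * t))
      = exp (1 - (1 - log (r 0)) * exp (C₁ * t)) := rpow_mul_exp_one_sub_eq (hpos 0 h0) _
    _ ≤ exp (log (r t)) := exp_le_exp.2 (by linarith)
    _ = r t := exp_log (hpos t ht)

/-- Osgood-type comparison lemma: if `0 < r(t) < 1` and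
`r'(t) ≥ -C₁ r(t)(1 - log r(t))` on `[0,T]`, then
`r(t) ≥ r(0)^{exp(C₁ t)} exp(1 - exp(C₁ t))`. -/
theorem osgood_lowerBound
    (C₁ T : ℝ) (hC₁ : 0 < C₁) (hT : 0 < T)
    (r r' : ℝ → ℝ)
    (hderiv : ∀ t ∈ Icc (0:ℝ) T, HasDerivWithinAt r (r' t) (Icc (0:ℝ) T) t)
    (hpos : ∀ t ∈ Icc (0:ℝ) T, 0 < r t)
    (hlt1 : ∀ t ∈ Icc (0:ℝ) T, r t < 1)
    (hineq : ∀ t ∈ Icc (0:ℝ) T, r' t ≥ -C₁ * r t * (1 - Real.log (r t))) :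
    ∀ t ∈ Icc (0:ℝ) T,
      r t ≥ r 0 ^ Real.exp (C₁ * t) * Real.exp (1 - Real.exp (C₁ * t)) :=
  osgood_lowerBound_general C₁ T r r' hderiv hpos hineq
end
end
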